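/- arXiv:0808.3230 — 3 statements merged into one kernel-verified Lean document; each statement's English description precedes it below -/
import Mathlib

section
/- Consider the noisy consensus model on a fixed connected graph with N ≥ 2 nodes in which every neighborhood (a node together with its adjacent nodes) has at most D nodes. If the noise level satisfies 1 − 2/D < η ≤ 1, then for any state x that is neither all +1s nor all −1s, there exists a node i and a positive probability that at the next step only node i flips its value; consequently the state sum can increase by 2 and decrease by 2, each with positive probability. -/
/-!
In a mixed state, connectedness gives an edge `u ~ w` with `x u = 1` and `x w = -1`. A closed
neighbourhood of at most `D` nodes containing a `+1` has average at least `2/D - 1 > -η`, and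
one containing a `-1` has average at most `1 - 2/D < η`. So for every node `j` both outcomes
`±1` that occur in its closed neighbourhood have positive probability under the uniform noise on
`[-η, η]`, and by independence so does any target state all of whose values `t j` occur in the
closed neighbourhood of `j`. Flipping `w` to `+1` (witnessed by `u`), resp. `u` to `-1`
(witnessed by `w`), gives such target states, with sums `∑ x + 2` and `∑ x - 2`.
-/

open MeasureTheory ProbabilityTheory Finset

lemma Finset.two_sub_card_le_sum {ι : Type*} {s : Finset ι} {y : ι → ℝ}
    (hy : ∀ i ∈ s, -1 ≤ y i) {k : ι} (hk : k ∈ s) (hyk : y k = 1) :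
    2 - (#s : ℝ) ≤ ∑ i ∈ s, y i := by
  have h := single_le_sum (f := fun i => y i + 1) (fun i hi => by linarith [hy i hi]) hk
  simp only [sum_add_distrib, sum_const, nsmul_eq_mul, mul_one] at h
  linarith

lemma Finset.two_div_sub_one_le_sum_div_card {ι : Type*} {s : Finset ι} {y : ι → ℝ} {D : ℕ}
    (hsD : #s ≤ D) (hy : ∀ i ∈ s, -1 ≤ y i) {k : ι} (hk : k ∈ s) (hyk : y k = 1) :
    2 / (D : ℝ) - 1 ≤ (∑ i ∈ s, y i) / #s := by
  have hs : (0 : ℝ) < #s := by exact_mod_cast card_pos.mpr ⟨k, hk⟩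
  calc 2 / (D : ℝ) - 1 ≤ 2 / #s - 1 := by gcongr
    _ = (2 - #s) / #s := by field_simp
    _ ≤ (∑ i ∈ s, y i) / #s := by gcongr; exact two_sub_card_le_sum hy hk hyk

lemma Finset.sum_div_card_le_one_sub_two_div {ι : Type*} {s : Finset ι} {y : ι → ℝ} {D : ℕ}
    (hsD : #s ≤ D) (hy : ∀ i ∈ s, y i ≤ 1) {k : ι} (hk : k ∈ s) (hyk : y k = -1) :
    (∑ i ∈ s, y i) / #s ≤ 1 - 2 / (D : ℝ) := by
  have h := two_div_sub_one_le_sum_div_card (y := -y) hsD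
    (fun i hi => by simpa using hy i hi) hk (by simp [hyk])
  simp only [Pi.neg_apply, sum_neg_distrib, neg_div] at h
  linarith

lemma Finset.neg_lt_sum_div_card_and_sum_div_card_lt {ι : Type*} {s : Finset ι} {y : ι → ℝ}
    {D : ℕ} {η : ℝ} (hsD : #s ≤ D) (hη : 1 - 2 / (D : ℝ) < η) (hy : ∀ i, y i = 1 ∨ y i = -1)
    {k : ι} (hk : k ∈ s) :
    (y k = 1 → -η < (∑ i ∈ s, y i) / #s) ∧ (y k = -1 → (∑ i ∈ s, y i) / #s < η) := by
  have hy_ge i : -1 ≤ y i := by rcases hy i with h | h <;> linarith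
  have hy_le i : y i ≤ 1 := by rcases hy i with h | h <;> linarith
  exact ⟨fun hyk => by linarith [two_div_sub_one_le_sum_div_card hsD (fun i _ => hy_ge i) hk hyk],
    fun hyk => by linarith [sum_div_card_le_one_sub_two_div hsD (fun i _ => hy_le i) hk hyk]⟩

lemma Finset.sum_univ_update {ι : Type*} [Fintype ι] [DecidableEq ι] (x : ι → ℝ) (i : ι)
    (b : ℝ) : ∑ j, Function.update x i b j = ∑ j, x j + (b - x i) := by
  rw [sum_update_of_mem (mem_univ i), ← add_sum_erase _ _ (mem_univ i), sdiff_singleton_eq_erase]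
  ring

lemma SimpleGraph.Preconnected.exists_adj_eq_one_eq_neg_one {V : Type*} {G : SimpleGraph V}
    (hG : G.Preconnected) {x : V → ℝ} (hx : ∀ i, x i = 1 ∨ x i = -1) (hmix1 : ¬ ∀ i, x i = 1)
    (hmix2 : ¬ ∀ i, x i = -1) : ∃ u w, G.Adj u w ∧ x u = 1 ∧ x w = -1 := by
  obtain ⟨a, ha⟩ := not_forall.mp hmix2
  obtain ⟨b, hb⟩ := not_forall.mp hmix1
  obtain ⟨d, -, hu, hw⟩ :=
    (hG a b).some.exists_boundary_dart {i | x i = 1} ((hx a).resolve_right ha) hb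
  exact ⟨d.fst, d.snd, d.adj, hu, (hx d.snd).resolve_left hw⟩

lemma SimpleGraph.Adj.exists_mem_insert_neighborFinset_eq_update {V α : Type*} [DecidableEq V]
    {G : SimpleGraph V} [∀ i, Fintype (G.neighborSet i)] {x : V → α} {u w : V} (huw : G.Adj u w) :
    ∀ j, ∃ k ∈ insert j (G.neighborFinset j), x k = Function.update x w (x u) j := by
  intro j
  rcases eq_or_ne j w with rfl | hj
  · exact ⟨u, by simp [huw.symm], by simp⟩
  · exact ⟨j, mem_insert_self _ _, by simp [hj]⟩

lemma cond_Icc_pos_of_Ioo_subset {l r a b : ℝ} {A : Set ℝ} (hab : a < b)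
    (hA : Set.Ioo a b ⊆ Set.Icc l r ∩ A) : 0 < volume[|Set.Icc l r] A := by
  rw [cond_apply measurableSet_Icc]
  refine ENNReal.mul_pos (ENNReal.inv_ne_zero.mpr measure_Icc_lt_top.ne) (ne_of_gt ?_)
  have hIoo : 0 < volume (Set.Ioo a b) := by simpa [Real.volume_Ioo] using hab
  exact hIoo.trans_le (measure_mono hA)

lemma cond_Icc_sign_eq_pos {η c τ : ℝ} (hη : 0 < η) (hτ : τ = 1 ∨ τ = -1)
    (hc₁ : τ = 1 → -η < c) (hc₂ : τ = -1 → c < η) :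
    0 < volume[|Set.Icc (-η) η] {s | (if 0 < c + s then 1 else -1 : ℝ) = τ} := by
  rcases hτ with rfl | rfl
  · refine cond_Icc_pos_of_Ioo_subset (a := max (-c) (-η)) (b := η)
      (max_lt (by linarith [hc₁ rfl]) (by linarith)) fun s ⟨hs₁, hs₂⟩ => ?_
    rw [max_lt_iff] at hs₁
    exact ⟨⟨hs₁.2.le, hs₂.le⟩, if_pos (by linarith)⟩
  · refine cond_Icc_pos_of_Ioo_subset (a := -η) (b := min (-c) η)
      (lt_min (by linarith [hc₂ rfl]) (by linarith)) fun s ⟨hs₁, hs₂⟩ => ?_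
    rw [lt_min_iff] at hs₂
    exact ⟨⟨hs₁.le, hs₂.2.le⟩, if_neg (by linarith)⟩

lemma pi_cond_Icc_forall_sign_eq_pos {ι : Type*} [Fintype ι] {η : ℝ} (hη : 0 < η)
    (c t : ι → ℝ) (ht : ∀ j, t j = 1 ∨ t j = -1) (hc₁ : ∀ j, t j = 1 → -η < c j)
    (hc₂ : ∀ j, t j = -1 → c j < η) :
    0 < Measure.pi (fun _ : ι => volume[|Set.Icc (-η) η])
      {ξ | ∀ j, (if 0 < c j + ξ j then 1 else -1 : ℝ) = t j} := by
  have hpi : {ξ : ι → ℝ | ∀ j, (if 0 < c j + ξ j then 1 else -1 : ℝ) = t j} =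
      Set.univ.pi fun j => {s | (if 0 < c j + s then 1 else -1 : ℝ) = t j} := by
    ext; simp
  rw [hpi, Measure.pi_pi]
  exact CanonicallyOrderedAdd.prod_pos.mpr fun j _ =>
    cond_Icc_sign_eq_pos hη (ht j) (hc₁ j) (hc₂ j)

theorem stmt_11_general (N : ℕ) (G : SimpleGraph (Fin N)) [DecidableRel G.Adj]
    (hconn : G.Connected) (D : ℕ)
    (hdeg : ∀ i, (insert i (G.neighborFinset i)).card ≤ D)
    (η : ℝ) (hη0 : 1 - 2 / (D : ℝ) < η)
    (x : Fin N → ℝ) (hx : ∀ i, x i = 1 ∨ x i = -1)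
    (hmix1 : ¬ ∀ i, x i = 1) (hmix2 : ¬ ∀ i, x i = -1)
    (v : (Fin N → ℝ) → Fin N → ℝ)
    (hv : ∀ y i, v y i =
      (∑ j ∈ insert i (G.neighborFinset i), y j) / (insert i (G.neighborFinset i)).card)
    (upd : (Fin N → ℝ) → (Fin N → ℝ) → Fin N → ℝ)
    (hupd : ∀ y ξ i, upd y ξ i = if 0 < v y i + ξ i then 1 else -1)
    (μ : Measure (Fin N → ℝ))
    (hμ : μ = Measure.pi fun _ : Fin N =>
      (volume (Set.Icc (-η) η))⁻¹ • volume.restrict (Set.Icc (-η) η)) :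
    (∃ i, 0 < μ {ξ | upd x ξ i = -(x i) ∧ ∀ j, j ≠ i → upd x ξ j = x j}) ∧
      0 < μ {ξ | ∑ j, upd x ξ j = (∑ j, x j) + 2} ∧
      0 < μ {ξ | ∑ j, upd x ξ j = (∑ j, x j) - 2} := by
  have hthreshold : ∀ j, ∀ k ∈ insert j (G.neighborFinset j),
      (x k = 1 → -η < v x j) ∧ (x k = -1 → v x j < η) := fun j k hk =>
    hv x j ▸ neg_lt_sum_div_card_and_sum_div_card_lt (hdeg j) hη0 hx hk
  obtain ⟨u, w, huw, hxu, hxw⟩ := hconn.preconnected.exists_adj_eq_one_eq_neg_one hx hmix1 hmix2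
  have hη : 0 < η := by
    linarith [(hthreshold w u (by simp [huw.symm])).1 hxu,
      (hthreshold w w (mem_insert_self _ _)).2 hxw]
  have reachable : ∀ t : Fin N → ℝ, (∀ j, ∃ k ∈ insert j (G.neighborFinset j), x k = t j) →
      0 < μ {ξ | ∀ j, upd x ξ j = t j} := by
    intro t ht
    choose k hk hxk using ht
    -- `volume[|s]` is by definition `(volume s)⁻¹ • volume.restrict s`
    simp only [hupd, hμ]
    exact pi_cond_Icc_forall_sign_eq_pos hη (v x) t (fun j => hxk j ▸ hx _)
      (fun j => hxk j ▸ (hthreshold j _ (hk j)).1) (fun j => hxk j ▸ (hthreshold j _ (hk j)).2)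
  have hup : 0 < μ {ξ | ∀ j, upd x ξ j = Function.update x w 1 j} :=
    hxu ▸ reachable _ huw.exists_mem_insert_neighborFinset_eq_update
  have hdown : 0 < μ {ξ | ∀ j, upd x ξ j = Function.update x u (-1) j} :=
    hxw ▸ reachable _ huw.symm.exists_mem_insert_neighborFinset_eq_update
  refine ⟨⟨w, hup.trans_le (measure_mono fun ξ hξ => ?_)⟩,
    hup.trans_le (measure_mono fun ξ hξ => ?_), hdown.trans_le (measure_mono fun ξ hξ => ?_)⟩
  all_goals simp only [Set.mem_ofPred_eq] at hξ ⊢; simp only [hξ]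
  · exact ⟨by simp [hxw], fun j hj => Function.update_of_ne hj _ _⟩
  · rw [sum_univ_update, hxw]; ring
  · rw [sum_univ_update, hxu]; ring

/-- Noisy consensus model on a fixed connected graph, neighborhoods of size at most D,
noise level 1 − 2/D < η ≤ 1: from any mixed state some single node flips with positive
probability, so the state sum can increase by 2 and decrease by 2 with positive
probability. -/
theorem stmt_11 (N : ℕ) (hN : 2 ≤ N) (G : SimpleGraph (Fin N)) [DecidableRel G.Adj]
    (hconn : G.Connected) (D : ℕ) (hD : 2 ≤ D)
    (hdeg : ∀ i, (insert i (G.neighborFinset i)).card ≤ D)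
    (η : ℝ) (hη0 : 1 - 2 / (D : ℝ) < η) (hη1 : η ≤ 1)
    (x : Fin N → ℝ) (hx : ∀ i, x i = 1 ∨ x i = -1)
    (hmix1 : ¬ ∀ i, x i = 1) (hmix2 : ¬ ∀ i, x i = -1)
    (v : (Fin N → ℝ) → Fin N → ℝ)
    (hv : ∀ y i, v y i =
      (∑ j ∈ insert i (G.neighborFinset i), y j) / (insert i (G.neighborFinset i)).card)
    (upd : (Fin N → ℝ) → (Fin N → ℝ) → Fin N → ℝ)
    (hupd : ∀ y ξ i, upd y ξ i = if 0 < v y i + ξ i then 1 else -1)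
    (μ : Measure (Fin N → ℝ))
    (hμ : μ = Measure.pi fun _ : Fin N =>
      (volume (Set.Icc (-η) η))⁻¹ • volume.restrict (Set.Icc (-η) η)) :
    (∃ i, 0 < μ {ξ | upd x ξ i = -(x i) ∧ ∀ j, j ≠ i → upd x ξ j = x j}) ∧
      0 < μ {ξ | ∑ j, upd x ξ j = (∑ j, x j) + 2} ∧
      0 < μ {ξ | ∑ j, upd x ξ j = (∑ j, x j) - 2} :=
  stmt_11_general N G hconn D hdeg η hη0 x hx hmix1 hmix2 v hv upd hupd μ hμ
end

section
/- Fix x ∈ {−1,+1}^N with N ≥ 2, and let G be a uniform Erdős random graph on N vertices. For each vertex i, let v_i = (Σ_{j ∈ N_i} x_j)/|N_i| where N_i is the closed neighborhood of i in G. Then Σ_{i=1}^N E[v_i] = Σ_{i=1}^N x_i. -/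
open scoped Classical

namespace Stmt15Aux

variable {N : ℕ}

/-- permutation action on graphs -/
def gEquiv (σ : Equiv.Perm (Fin N)) : SimpleGraph (Fin N) ≃ SimpleGraph (Fin N) where
  toFun G := G.comap σ
  invFun G := G.comap σ.symm
  left_inv G := by ext u v; simp
  right_inv G := by ext u v; simp

lemma nbhd_comap (σ : Equiv.Perm (Fin N)) (G : SimpleGraph (Fin N)) (i : Fin N) :
    insert i ((G.comap σ).neighborFinset i)
      = (insert (σ i) (G.neighborFinset (σ i))).map σ.symm.toEmbedding := by
  ext j
  simp only [Finset.mem_insert, SimpleGraph.mem_neighborFinset, SimpleGraph.comap_adj,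
    Finset.mem_map, Equiv.toEmbedding_apply]
  constructor
  · rintro (rfl | h)
    · exact ⟨σ j, Or.inl rfl, σ.symm_apply_apply j⟩
    · exact ⟨σ j, Or.inr h, σ.symm_apply_apply j⟩
  · rintro ⟨a, (rfl | h), rfl⟩
    · exact Or.inl (by simp)
    · right
      simpa using h

noncomputable def M (N : ℕ) (i k : Fin N) : ℝ :=
  ∑ G : SimpleGraph (Fin N),
    (if k ∈ insert i (G.neighborFinset i) then (1:ℝ) else 0)
      / (insert i (G.neighborFinset i)).card

lemma M_symm (σ : Equiv.Perm (Fin N)) (i k : Fin N) : M N i k = M N (σ i) (σ k) := by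
  unfold M
  rw [← Equiv.sum_comp (gEquiv σ) (fun G : SimpleGraph (Fin N) =>
    (if k ∈ insert i (G.neighborFinset i) then (1:ℝ) else 0)
      / (insert i (G.neighborFinset i)).card)]
  apply Finset.sum_congr rfl
  intro G _
  show (if k ∈ insert i ((G.comap σ).neighborFinset i) then (1:ℝ) else 0)
      / (insert i ((G.comap σ).neighborFinset i)).card = _
  rw [nbhd_comap]
  simp only [Finset.card_map, Finset.mem_map, Equiv.toEmbedding_apply]
  congr 1
  congr 1
  apply propext
  constructor
  · rintro ⟨a, ha, rfl⟩; simpa using ha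
  · intro h; exact ⟨σ k, h, σ.symm_apply_apply k⟩


lemma M_diag (i j : Fin N) : M N i i = M N j j := by
  have h := M_symm (Equiv.swap i j) i i
  simpa using h

lemma doubly_trans (i k i' k' : Fin N) (h1 : i ≠ k) (h2 : i' ≠ k') :
    ∃ σ : Equiv.Perm (Fin N), σ i = i' ∧ σ k = k' := by
  set m := Equiv.swap i i' k with hm
  have hmi' : m ≠ i' := by
    rcases eq_or_ne k i' with rfl | h
    · rw [hm, Equiv.swap_apply_right]
      exact h1
    · rw [hm, Equiv.swap_apply_of_ne_of_ne (Ne.symm h1) h]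
      exact h
  refine ⟨(Equiv.swap m k') * (Equiv.swap i i'), ?_, ?_⟩
  · simp only [Equiv.Perm.mul_apply, Equiv.swap_apply_left]
    exact Equiv.swap_apply_of_ne_of_ne (Ne.symm hmi') h2
  · simp only [Equiv.Perm.mul_apply, ← hm]
    exact Equiv.swap_apply_left m k'

lemma M_off (i k i' k' : Fin N) (h1 : i ≠ k) (h2 : i' ≠ k') : M N i k = M N i' k' := by
  obtain ⟨σ, hi, hk⟩ := doubly_trans i k i' k' h1 h2
  rw [M_symm σ i k, hi, hk]

lemma M_rowsum (i : Fin N) :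
    ∑ k, M N i k = (Fintype.card (SimpleGraph (Fin N)) : ℝ) := by
  unfold M
  rw [Finset.sum_comm]
  have : ∀ G : SimpleGraph (Fin N),
      (∑ k, (if k ∈ insert i (G.neighborFinset i) then (1:ℝ) else 0)
        / (insert i (G.neighborFinset i)).card) = 1 := by
    intro G
    rw [← Finset.sum_div]
    rw [Finset.sum_ite_mem, Finset.univ_inter, Finset.sum_const, nsmul_eq_mul, mul_one]
    have hc : ((insert i (G.neighborFinset i)).card : ℝ) ≠ 0 := by
      have : 0 < (insert i (G.neighborFinset i)).card :=
        Finset.card_pos.mpr ⟨i, Finset.mem_insert_self i _⟩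
      positivity
    field_simp
  rw [Finset.sum_congr rfl (fun G _ => this G)]
  rw [Finset.sum_const, nsmul_eq_mul, mul_one, Fintype.card]

lemma expand (x : Fin N → ℝ) (i : Fin N) :
    (∑ G : SimpleGraph (Fin N),
      (∑ j ∈ insert i (G.neighborFinset i), x j) / (insert i (G.neighborFinset i)).card)
    = ∑ k, x k * M N i k := by
  unfold M
  simp_rw [Finset.mul_sum]
  rw [Finset.sum_comm]
  apply Finset.sum_congr rfl
  intro G _
  rw [show (∑ j ∈ insert i (G.neighborFinset i), x j)
      = ∑ k, (if k ∈ insert i (G.neighborFinset i) then x k else 0) by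
    rw [Finset.sum_ite_mem, Finset.univ_inter]]
  rw [Finset.sum_div]
  apply Finset.sum_congr rfl
  intro k _
  split_ifs with h
  · ring
  · simp

end Stmt15Aux


open scoped Classical in
/-- For a fixed x ∈ {−1,+1}^N and a uniform Erdős random graph on N vertices,
the sum over i of the expected closed-neighborhood average E[v_i] equals Σ_i x_i. -/
theorem stmt_15 (N : ℕ) (hN : 2 ≤ N) (x : Fin N → ℝ) (hx : ∀ i, x i = 1 ∨ x i = -1) :
    ∑ i, (∑ G : SimpleGraph (Fin N),
        (∑ j ∈ insert i (G.neighborFinset i), x j) / (insert i (G.neighborFinset i)).card)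
      / (Fintype.card (SimpleGraph (Fin N)) : ℝ)
      = ∑ i, x i := by
  classical
  set C : ℝ := (Fintype.card (SimpleGraph (Fin N)) : ℝ) with hC
  have hCpos : 0 < C := by
    have : 0 < Fintype.card (SimpleGraph (Fin N)) := Fintype.card_pos
    rw [hC]
    exact_mod_cast this
  set i0 : Fin N := ⟨0, by omega⟩
  set k0 : Fin N := ⟨1, by omega⟩
  have hne : i0 ≠ k0 := by simp [i0, k0, Fin.ext_iff]
  set a : ℝ := Stmt15Aux.M N i0 i0
  set b : ℝ := Stmt15Aux.M N i0 k0
  have hM : ∀ i k : Fin N, Stmt15Aux.M N i k = if i = k then a else b := by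
    intro i k
    split_ifs with h
    · subst h; exact Stmt15Aux.M_diag i i0
    · exact Stmt15Aux.M_off i k i0 k0 h hne
  have hcol : ∀ k : Fin N, ∑ i, Stmt15Aux.M N i k = C := by
    intro k
    have : ∑ i, Stmt15Aux.M N i k = ∑ i, Stmt15Aux.M N k i := by
      apply Finset.sum_congr rfl
      intro i _
      rw [hM, hM]
      simp [eq_comm]
    rw [this, Stmt15Aux.M_rowsum k]
  have h1 : ∀ i : Fin N,
      (∑ G : SimpleGraph (Fin N),
        (∑ j ∈ insert i (G.neighborFinset i), x j) / (insert i (G.neighborFinset i)).card)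
      = ∑ k, x k * Stmt15Aux.M N i k := fun i => Stmt15Aux.expand x i
  calc ∑ i, (∑ G : SimpleGraph (Fin N),
        (∑ j ∈ insert i (G.neighborFinset i), x j) / (insert i (G.neighborFinset i)).card) / C
      = ∑ i, (∑ k, x k * Stmt15Aux.M N i k) / C := by
        apply Finset.sum_congr rfl; intro i _; rw [h1 i]
    _ = (∑ i, ∑ k, x k * Stmt15Aux.M N i k) / C := by rw [Finset.sum_div]
    _ = (∑ k, x k * ∑ i, Stmt15Aux.M N i k) / C := by
        rw [Finset.sum_comm]
        simp_rw [Finset.mul_sum]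
    _ = (∑ k, x k * C) / C := by simp_rw [hcol]
    _ = ∑ k, x k := by
        rw [← Finset.sum_mul, mul_div_assoc, div_self (ne_of_gt hCpos), mul_one]
end

section
/- For the two-node noisy consensus chain with edge probability p ∈ (0,1) and noise level η > 1, if the state distribution at time k is (p_{++}, p_{+-}, p_{-+}, p_{--}) with expected state sum 2(p_{++} − p_{--}), then the expected state sum at time k+1 equals 2(p_{++} − p_{--})/η; in particular the decay rate of the expected state sum is 1/η and does not depend on p. -/
/-- Two-node noisy consensus chain, states ordered (+,+), (+,−), (−,−), (−,+):
the expected state sum decays by exactly the factor 1/η in one step,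
independently of the edge probability p. -/
theorem stmt_18 (η p : ℝ) (hη : 1 < η) (hp : p ∈ Set.Ioo (0 : ℝ) 1)
    (q a b c : ℝ)
    (hq : q = 1 - p)
    (ha : a = (η - 1) ^ 2 / (4 * η ^ 2))
    (hb : b = (η - 1) * (η + 1) / (4 * η ^ 2))
    (hc : c = (η + 1) ^ 2 / (4 * η ^ 2))
    (P : Matrix (Fin 4) (Fin 4) ℝ)
    (hP : P = !![c, p / 4 + q * b, a, p / 4 + q * b;
                 b, p / 4 + q * c, b, p / 4 + q * a;
                 a, p / 4 + q * b, c, p / 4 + q * b;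
                 b, p / 4 + q * a, b, p / 4 + q * c])
    (p0 : Fin 4 → ℝ) (hp0 : ∀ s, 0 ≤ p0 s) (hsum : ∑ s, p0 s = 1) :
    2 * ((P.mulVec p0) 0 - (P.mulVec p0) 2) = 2 * (p0 0 - p0 2) / η := by
  have hη0 : η ≠ 0 := by positivity
  subst hP ha hc
  simp [Matrix.mulVec, dotProduct, Fin.sum_univ_four]
  field_simp
  ring
end
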